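/- Let X : Ω → ℕ be the number of distinct n-grams occurring in a random corpus of N i.i.d. tokens, where the k-th most frequent n-gram has occurrence probability q_k ≤ p·k^{-δ} per position with δ > 1. Then E[X] ≤ C·N^{1/δ} for a constant C depending only on p and δ. -/

import Mathlib

/-!
Each term satisfies `0 ≤ 1 - (1 - q_k)^N ≤ 1` and, by Bernoulli's inequality,
`1 - (1 - q_k)^N ≤ N q_k ≤ N p (k+1)^(-δ)`. Split the sum at `K = ⌈N^(1/δ)⌉`: the first `K`
terms contribute at most `K ≤ 2 N^(1/δ)`, and by the integral test the tail contributes at most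
`N p K^(1-δ) / (δ - 1) ≤ p N^(1/δ) / (δ - 1)`.
-/

open Real Set MeasureTheory

lemma one_sub_one_sub_pow_le_mul {q : ℝ} (hq : q ≤ 2) (N : ℕ) : 1 - (1 - q) ^ N ≤ N * q := by
  have bernoulli := one_add_mul_le_pow (a := -q) (by linarith) N
  rw [← sub_eq_add_neg] at bernoulli
  linarith

lemma tsum_nat_add_succ_rpow_neg_le {δ : ℝ} (hδ : 1 < δ) {K : ℕ} (hK : 0 < K) :
    ∑' n : ℕ, (((n + K : ℕ) : ℝ) + 1) ^ (-δ) ≤ (K : ℝ) ^ (1 - δ) / (δ - 1) := by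
  have hK' : (0 : ℝ) < K := by exact_mod_cast hK
  have hanti : AntitoneOn (fun x : ℝ => x ^ (-δ)) (Ici (K : ℝ)) := fun x hx y _ hxy =>
    rpow_le_rpow_of_nonpos (hK'.trans_le hx) hxy (by linarith)
  calc ∑' n : ℕ, (((n + K : ℕ) : ℝ) + 1) ^ (-δ)
      = ∑' n : ℕ, (((n + K + 1 : ℕ) : ℝ)) ^ (-δ) := by push_cast; rfl
    _ ≤ ∫ x in Ioi (K : ℝ), x ^ (-δ) :=
        hanti.tsum_comp_add_le_integral K (integrableOn_Ioi_rpow_of_lt (by linarith) hK')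
          fun x hx => rpow_nonneg (hK'.le.trans hx.le) _
    _ = (K : ℝ) ^ (1 - δ) / (δ - 1) := by
        rw [integral_Ioi_rpow_of_lt (by linarith) hK', neg_div, ← div_neg]
        ring_nf

lemma tsum_le_of_le_one_of_le_mul_rpow_neg {f : ℕ → ℝ} {A δ : ℝ} (hδ : 1 < δ)
    (hf0 : ∀ k, 0 ≤ f k) (hf1 : ∀ k, f k ≤ 1) (hfA : ∀ k, f k ≤ A * ((k : ℝ) + 1) ^ (-δ))
    {K : ℕ} (hK : 0 < K) :
    ∑' k, f k ≤ K + A * ((K : ℝ) ^ (1 - δ) / (δ - 1)) := by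
  have hA : 0 ≤ A := by simpa using (hf0 0).trans (hfA 0)
  have hsumm : Summable fun k : ℕ => ((k : ℝ) + 1) ^ (-δ) := by
    exact_mod_cast (summable_nat_add_iff 1).2 (summable_nat_rpow.2 (by linarith : -δ < -1))
  have hfsumm : Summable f := (hsumm.mul_left A).of_nonneg_of_le hf0 hfA
  rw [← hfsumm.sum_add_tsum_nat_add K]
  gcongr
  · calc ∑ k ∈ Finset.range K, f k ≤ ∑ k ∈ Finset.range K, (1 : ℝ) :=
          Finset.sum_le_sum fun k _ => hf1 k
      _ = K := by simp
  · calc ∑' k, f (k + K) ≤ ∑' k, A * (((k + K : ℕ) : ℝ) + 1) ^ (-δ) :=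
          ((summable_nat_add_iff K).2 hfsumm).tsum_le_tsum (fun k => hfA (k + K))
            (((summable_nat_add_iff K).2 hsumm).mul_left A)
      _ = A * ∑' k, (((k + K : ℕ) : ℝ) + 1) ^ (-δ) := tsum_mul_left
      _ ≤ A * ((K : ℝ) ^ (1 - δ) / (δ - 1)) := by
          gcongr; exact tsum_nat_add_succ_rpow_neg_le hδ hK

lemma mul_rpow_one_sub_le_rpow_inv {x y δ : ℝ} (hx : 0 < x) (hδ : 1 ≤ δ) (hy : x ^ (1 / δ) ≤ y) :
    x * y ^ (1 - δ) ≤ x ^ (1 / δ) := by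
  have hexp : 1 / δ * (1 - δ) = 1 / δ - 1 := by field_simp
  calc x * y ^ (1 - δ) ≤ x * (x ^ (1 / δ)) ^ (1 - δ) :=
        mul_le_mul_of_nonneg_left
          (rpow_le_rpow_of_nonpos (rpow_pos_of_pos hx _) hy (by linarith)) hx.le
    _ = x ^ (1 / δ) := by
        rw [← rpow_mul hx.le, hexp, rpow_sub hx, rpow_one]
        field_simp

/-- Generalized Heaps' law: if the `k`-th most frequent n-gram has occurrence probability
`q_k ≤ p·k^(-δ)` per position (with `0 ≤ q_k ≤ 1` and `δ > 1`), then the expected number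
of distinct n-grams occurring among `N` i.i.d. positions,
`E[X] = Σ_k (1 - (1 - q_k)^N)`, is at most `C·N^(1/δ)` for a constant `C` depending
only on `p` and `δ`. -/
theorem expected_distinct_ngrams_le (δ p : ℝ) (hδ : 1 < δ) (hp : 0 < p) :
    ∃ C : ℝ, ∀ (N : ℕ), 0 < N → ∀ (q : ℕ → ℝ),
      (∀ k, 0 ≤ q k) → (∀ k, q k ≤ 1) →
      (∀ k, q k ≤ p * ((k : ℝ) + 1) ^ (-δ)) →
      ∑' k : ℕ, (1 - (1 - q k) ^ N) ≤ C * (N : ℝ) ^ (1 / δ) := by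
  refine ⟨2 + p / (δ - 1), fun N hN q hq0 hq1 hqp => ?_⟩
  have hN : (1 : ℝ) ≤ N := by exact_mod_cast hN
  set r : ℝ := (N : ℝ) ^ (1 / δ)
  have hr : 1 ≤ r := one_le_rpow hN (by positivity)
  set K : ℕ := ⌈r⌉₊
  have hK : 0 < K := Nat.ceil_pos.2 (by linarith)
  have hKr : (K : ℝ) ≤ 2 * r := Nat.ceil_le_two_mul (by linarith)
  have htail : (N : ℝ) * (K : ℝ) ^ (1 - δ) ≤ r :=
    mul_rpow_one_sub_le_rpow_inv (by linarith) hδ.le (Nat.le_ceil r)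
  have hterm : ∀ k, 1 - (1 - q k) ^ N ≤ N * p * ((k : ℝ) + 1) ^ (-δ) := fun k =>
    calc 1 - (1 - q k) ^ N ≤ N * q k := one_sub_one_sub_pow_le_mul (by linarith [hq1 k]) N
      _ ≤ N * (p * ((k : ℝ) + 1) ^ (-δ)) := by gcongr; exact hqp k
      _ = _ := by ring
  calc ∑' k : ℕ, (1 - (1 - q k) ^ N)
      ≤ K + N * p * ((K : ℝ) ^ (1 - δ) / (δ - 1)) :=
        tsum_le_of_le_one_of_le_mul_rpow_neg hδ
          (fun k => sub_nonneg.2 (pow_le_one₀ (by linarith [hq1 k]) (by linarith [hq0 k])))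
          (fun k => sub_le_self _ (pow_nonneg (by linarith [hq1 k]) N)) hterm hK
    _ = K + p / (δ - 1) * (N * (K : ℝ) ^ (1 - δ)) := by ring
    _ ≤ 2 * r + p / (δ - 1) * r := by
        have : 0 ≤ p / (δ - 1) := div_nonneg hp.le (by linarith)
        gcongr
    _ = (2 + p / (δ - 1)) * r := by ring
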